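/- arXiv:1903.10724 — 2 statements merged into one kernel-verified Lean document; each statement's English description precedes it below -/
import Mathlib

section
/- Let X be a set with ternary operation [ ] satisfying LN and RN, and let p, k ≥ 0. Let Cₙ^{(p,k),D} ⊆ Cₙ = R⟨X^{n+2}⟩ be the submodule generated by (n+2)-tuples (x₀,…,xₙ₊₁) for which there exists an index i with p ≤ i, i+2 ≤ n+1−k, and xᵢ₊₁ = [xᵢ xᵢ₊₁ xᵢ₊₂] (taking Cₙ^{(p,k),D} = 0 if n−p−k < 1). Then the truncated left differential ∂ₙ^{(p,k),L} = Σ_{i=p}^{n−k} (−1)ⁱ dᵢⁿ'ᴸ maps Cₙ^{(p,k),D} into Cₙ₋₁^{(p,k),D}. -/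
universe u
variable {X : Type u}
open Fin.NatCast

/-- Substitution: replace the `i`-th entry `xᵢ` of the tuple by `[xᵢ₋₁ xᵢ xᵢ₊₁]`. -/
def subst (t : X → X → X → X) (n i : ℕ) (x : Fin (n + 2) → X) : Fin (n + 2) → X :=
  Function.update x (i : Fin (n + 2))
    (t (x ((i : Fin (n + 2)) - 1)) (x (i : Fin (n + 2))) (x ((i : Fin (n + 2)) + 1)))

/-- Left face maps `dᵢⁿ'ᴸ` on tuples. -/
def dL (t : X → X → X → X) (n : ℕ) : ℕ → (Fin (n + 2) → X) → (Fin (n + 1) → X)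
  | 0, x => fun j => x j.succ
  | i + 1, x => dL t n i (subst t n (i + 1) x)

/-- Auxiliary for right face maps: `dRa t n m = d_{n-m}ⁿ'ᴿ`. -/
def dRa (t : X → X → X → X) (n : ℕ) : ℕ → (Fin (n + 2) → X) → (Fin (n + 1) → X)
  | 0, x => fun j => x j.castSucc
  | m + 1, x => dRa t n m (subst t n (n - m) x)

/-- Right face maps `dᵢⁿ'ᴿ` on tuples. -/
def dR (t : X → X → X → X) (n i : ℕ) : (Fin (n + 2) → X) → (Fin (n + 1) → X) :=
  dRa t n (n - i)

/-- Left face maps on the free module `Cₙ = R⟨X^{n+2}⟩`. -/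
noncomputable def dLhat (R : Type*) [CommRing R] (t : X → X → X → X) (n i : ℕ) :
    ((Fin (n + 2) → X) →₀ R) →ₗ[R] ((Fin (n + 1) → X) →₀ R) :=
  Finsupp.lmapDomain R R (dL t n i)

/-- Right face maps on the free module `Cₙ = R⟨X^{n+2}⟩`. -/
noncomputable def dRhat (R : Type*) [CommRing R] (t : X → X → X → X) (n i : ℕ) :
    ((Fin (n + 2) → X) →₀ R) →ₗ[R] ((Fin (n + 1) → X) →₀ R) :=
  Finsupp.lmapDomain R R (dR t n i)

/-- The `(p,k)`-degenerate submodule `Cₙ^{(p,k),D}`: spanned by tuples with a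
degenerate consecutive triple at positions `i, i+1, i+2` for some `p ≤ i`
with `i + 2 ≤ n + 1 − k`. -/
noncomputable def Cdeg (R : Type*) [CommRing R] (t : X → X → X → X) (p k n : ℕ) :
    Submodule R ((Fin (n + 2) → X) →₀ R) :=
  Submodule.span R {f | ∃ x : Fin (n + 2) → X, ∃ i : ℕ, p ≤ i ∧ i + 2 + k ≤ n + 1 ∧
    x (↑(i + 1)) = t (x ↑i) (x ↑(i + 1)) (x ↑(i + 2)) ∧ f = Finsupp.single x 1}

/-!
On a generator `x` with `x_{i+1} = [x_i x_{i+1} x_{i+2}]` the substitution defining `d_{i+1}`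
changes nothing, so `d_{i+1} x = d_i x`, and the two faces cancel in the alternating sum.
A face `d_j` with `j < i` only shifts the degenerate triple to position `i - 1`. A face `d_j`
with `j ≥ i + 2` keeps it at position `i`: for `j = i + 2` the new triple is degenerate exactly
by RN, and larger `j` substitute only to the right of position `i + 2` before reaching `d_{i+2}`.
-/

section FaceMaps

variable (t : X → X → X → X)

def IsDegenerateAt {m : ℕ} [NeZero m] (x : Fin m → X) (i : ℕ) : Prop :=
  x ↑(i + 1) = t (x ↑i) (x ↑(i + 1)) (x ↑(i + 2))

lemma Fin.natCast_ne_natCast {m a b : ℕ} [NeZero m] (ha : a < m) (hb : b < m) (h : a ≠ b) :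
    (a : Fin m) ≠ b := fun hab => h <| by
  simpa [Fin.val_cast_of_lt ha, Fin.val_cast_of_lt hb] using congrArg Fin.val hab

lemma Fin.natCast_succ_sub_one {m j : ℕ} [NeZero m] : ((j + 1 : ℕ) : Fin m) - 1 = j := by
  push_cast; exact add_sub_cancel_right _ _

lemma Fin.natCast_succ_add_one {m j : ℕ} [NeZero m] : ((j + 1 : ℕ) : Fin m) + 1 = ↑(j + 2) := by
  push_cast; rw [add_assoc, one_add_one_eq_two]

lemma subst_apply_of_ne {n i m : ℕ} (x : Fin (n + 2) → X) (hi : i < n + 2) (hm : m < n + 2)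
    (h : m ≠ i) : subst t n i x m = x m := by
  rw [subst, Function.update_of_ne (Fin.natCast_ne_natCast hm hi h)]

lemma subst_succ_apply_self {n j : ℕ} (x : Fin (n + 2) → X) :
    subst t n (j + 1) x ↑(j + 1) = t (x ↑j) (x ↑(j + 1)) (x ↑(j + 2)) := by
  rw [subst, Function.update_self, Fin.natCast_succ_sub_one, Fin.natCast_succ_add_one]

lemma subst_succ_eq_self {n i : ℕ} {x : Fin (n + 2) → X} (h : IsDegenerateAt t x i) :
    subst t n (i + 1) x = x := by
  rw [subst, Fin.natCast_succ_sub_one, Fin.natCast_succ_add_one, ← h, Function.update_eq_self]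

lemma dL_apply_of_le {n j m : ℕ} (x : Fin (n + 2) → X) (hjm : j ≤ m) (hm : m < n + 1) :
    dL t n j x m = x ↑(m + 1) := by
  induction j generalizing x with
  | zero =>
    show x (m : Fin (n + 1)).succ = _
    congr 1
    ext
    rw [Fin.val_succ, Fin.val_cast_of_lt hm, Fin.val_cast_of_lt (by omega)]
  | succ j ih =>
    rw [dL, ih _ (by omega), subst_apply_of_ne t x (by omega) (by omega) (by omega)]

lemma dL_succ_apply_self {n j : ℕ} (x : Fin (n + 2) → X) (hj : j < n + 1) :
    dL t n (j + 1) x j = t (x ↑j) (x ↑(j + 1)) (x ↑(j + 2)) := by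
  rw [dL, dL_apply_of_le t _ le_rfl hj, subst_succ_apply_self]

lemma dL_succ_eq_of_isDegenerateAt {n i : ℕ} {x : Fin (n + 2) → X} (h : IsDegenerateAt t x i) :
    dL t n (i + 1) x = dL t n i x := by
  rw [dL, subst_succ_eq_self t h]

lemma isDegenerateAt_dL_of_le {n j i : ℕ} {x : Fin (n + 2) → X} (hj : j ≤ i) (hi : i + 2 < n + 1)
    (h : IsDegenerateAt t x (i + 1)) : IsDegenerateAt t (dL t n j x) i := by
  rw [IsDegenerateAt, dL_apply_of_le t x hj (by omega), dL_apply_of_le t x (by omega) (by omega),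
    dL_apply_of_le t x (by omega) hi]
  exact h

lemma isDegenerateAt_dL_of_lt {n i j : ℕ} {x : Fin (n + 2) → X}
    (hRN : ∀ a b c d, t (t a b c) c d = t (t a b (t b c d)) (t b c d) d)
    (hij : i + 2 ≤ j) (hj : j ≤ n) (h : IsDegenerateAt t x i) :
    IsDegenerateAt t (dL t n j x) i := by
  induction j, hij using Nat.le_induction generalizing x with
  | base =>
    have h₀ : dL t n (i + 2) x ↑i =
        t (x ↑i) (x ↑(i + 1)) (t (x ↑(i + 1)) (x ↑(i + 2)) (x ↑(i + 3))) := by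
      rw [dL, dL_succ_apply_self t _ (by omega), subst_succ_apply_self,
        subst_apply_of_ne t x (by omega) (by omega) (by omega),
        subst_apply_of_ne t x (by omega) (by omega) (by omega)]
    rw [IsDegenerateAt, h₀, dL_succ_apply_self t x (by omega),
      dL_apply_of_le t x le_rfl (by omega), ← hRN, ← h]
  | succ j hij ih =>
    have hfix : ∀ m ≤ i + 2, subst t n (j + 1) x ↑m = x ↑m := fun m hm =>
      subst_apply_of_ne t x (by omega) (by omega) (by omega)
    apply ih (by omega)
    rw [IsDegenerateAt, hfix i (by omega), hfix (i + 1) (by omega), hfix (i + 2) le_rfl]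
    exact h

end FaceMaps

lemma single_mem_Cdeg (R : Type*) [CommRing R] (t : X → X → X → X) {p k n i : ℕ}
    {x : Fin (n + 2) → X} (hpi : p ≤ i) (hik : i + 2 + k ≤ n + 1) (h : IsDegenerateAt t x i) :
    Finsupp.single x 1 ∈ Cdeg R t p k n :=
  Submodule.subset_span ⟨x, i, hpi, hik, h, rfl⟩

lemma single_dL_mem_Cdeg (R : Type*) [CommRing R] (t : X → X → X → X)
    (hRN : ∀ a b c d, t (t a b c) c d = t (t a b (t b c d)) (t b c d) d) {p k n i j : ℕ}
    {x : Fin (n + 3) → X} (hpi : p ≤ i) (hik : i + 2 + k ≤ n + 2) (h : IsDegenerateAt t x i)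
    (hpj : p ≤ j) (hjk : j + k ≤ n + 1) (hji : j ≠ i) (hji_succ : j ≠ i + 1) :
    Finsupp.single (dL t (n + 1) j x) 1 ∈ Cdeg R t p k n := by
  rcases lt_or_gt_of_ne hji with hlt | hgt
  · obtain ⟨m, rfl⟩ : ∃ m, i = m + 1 := ⟨i - 1, by omega⟩
    exact single_mem_Cdeg R t (by omega) (by omega)
      (isDegenerateAt_dL_of_le t (by omega) (by omega) h)
  · exact single_mem_Cdeg R t hpi (by omega) (isDegenerateAt_dL_of_lt t hRN (by omega) (by omega) h)

lemma dLhat_single (R : Type*) [CommRing R] (t : X → X → X → X) (n i : ℕ)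
    (x : Fin (n + 2) → X) : dLhat R t n i (Finsupp.single x 1) = Finsupp.single (dL t n i x) 1 :=
  Finsupp.mapDomain_single

theorem stmt10_general (R : Type*) [CommRing R] (t : X → X → X → X)
    (hRN : ∀ a b c d, t (t a b c) c d = t (t a b (t b c d)) (t b c d) d)
    (p k : ℕ) :
    ∀ n : ℕ,
      (Cdeg R t p k (n + 1)).map
          (∑ i ∈ Finset.Icc p (n + 1),
            if i + k ≤ n + 1 then ((-1 : R) ^ i) • dLhat R t (n + 1) i else 0)
        ≤ Cdeg R t p k n := by
  intro n
  rw [Submodule.map_le_iff_le_comap, Cdeg, Submodule.span_le]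
  rintro _ ⟨x, i, hpi, hik, hdeg, rfl⟩
  let g : ℕ → (Fin (n + 2) → X) →₀ R := fun j =>
    if j + k ≤ n + 1 then (-1 : R) ^ j • Finsupp.single (dL t (n + 1) j x) 1 else 0
  have hi : i ∈ Finset.Icc p (n + 1) := Finset.mem_Icc.2 ⟨hpi, by omega⟩
  have hi_succ : i + 1 ∈ (Finset.Icc p (n + 1)).erase i := by
    simp only [Finset.mem_erase, Finset.mem_Icc]; omega
  have hcancel : g (i + 1) + g i = 0 := by
    simp only [g, if_pos (show i + 1 + k ≤ n + 1 by omega), if_pos (show i + k ≤ n + 1 by omega),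
      dL_succ_eq_of_isDegenerateAt t hdeg, pow_succ, mul_neg_one, neg_smul, neg_add_cancel]
  have hrest : ∑ j ∈ ((Finset.Icc p (n + 1)).erase i).erase (i + 1), g j ∈ Cdeg R t p k n := by
    refine Submodule.sum_mem _ fun j hj => ?_
    simp only [Finset.mem_erase, Finset.mem_Icc] at hj
    obtain ⟨hj_ne_succ, hj_ne, hpj, -⟩ := hj
    unfold g
    split_ifs with hjk
    · exact Submodule.smul_mem _ _ <|
        single_dL_mem_Cdeg R t hRN hpi hik hdeg hpj hjk hj_ne hj_ne_succ
    · exact Submodule.zero_mem _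
  have himage : (∑ j ∈ Finset.Icc p (n + 1),
      if j + k ≤ n + 1 then ((-1 : R) ^ j) • dLhat R t (n + 1) j else 0) (Finsupp.single x 1) =
      ∑ j ∈ Finset.Icc p (n + 1), g j := by
    simp only [LinearMap.sum_apply, g]
    refine Finset.sum_congr rfl fun j _ => ?_
    split_ifs <;> simp [dLhat_single]
  rw [SetLike.mem_coe, Submodule.mem_comap, himage, ← Finset.sum_erase_add _ _ hi,
    ← Finset.sum_erase_add _ _ hi_succ, add_assoc _ (g (i + 1)), hcancel, add_zero]
  exact hrest

/-- If the ternary operation satisfies LN and RN, the truncated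
left differential `∂ₙ^{(p,k),L} = Σ_{i=p}^{n−k} (−1)ⁱ dᵢⁿ'ᴸ` maps the
degenerate submodule `Cₙ^{(p,k),D}` into `Cₙ₋₁^{(p,k),D}`. -/
theorem stmt10 (R : Type*) [CommRing R] (t : X → X → X → X)
    (hLN : ∀ a b c d, t a b (t b c d) = t a (t a b c) (t (t a b c) c d))
    (hRN : ∀ a b c d, t (t a b c) c d = t (t a b (t b c d)) (t b c d) d)
    (p k : ℕ) :
    ∀ n : ℕ,
      (Cdeg R t p k (n + 1)).map
          (∑ i ∈ Finset.Icc p (n + 1),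
            if i + k ≤ n + 1 then ((-1 : R) ^ i) • dLhat R t (n + 1) i else 0)
        ≤ Cdeg R t p k n :=
  stmt10_general R t hRN p k
end

section
/- Let X be a set with ternary operation [ ] satisfying LN and RN, and suppose (x₀,…,xₙ₊₁) contains a degenerate triple at positions j, j+1, j+2 (i.e., xⱼ₊₁ = [xⱼ xⱼ₊₁ xⱼ₊₂]). Then d_{j+1}ⁿ'ᴸ(x₀,…,xₙ₊₁) = d_jⁿ'ᴸ(x₀,…,xₙ₊₁), i.e., consecutive left face maps agree on tuples degenerate at the corresponding position. -/
universe u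
variable {X : Type u}
open Fin.NatCast

theorem subst_eq_self_of_degenerate (t : X → X → X → X) (n i : ℕ) (x : Fin (n + 2) → X)
    (h : x i = t (x ((i : Fin (n + 2)) - 1)) (x i) (x ((i : Fin (n + 2)) + 1))) :
    subst t n i x = x :=
  Function.update_eq_self_iff.mpr h.symm

theorem dL_succ_eq_of_degenerate (t : X → X → X → X) (n i : ℕ) (x : Fin (n + 2) → X)
    (h : x ↑(i + 1) = t (x ↑i) (x ↑(i + 1)) (x ↑(i + 2))) :
    dL t n (i + 1) x = dL t n i x := by
  have hprev : ((i + 1 : ℕ) : Fin (n + 2)) - 1 = i := by simp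
  have hnext : ((i + 1 : ℕ) : Fin (n + 2)) + 1 = ↑(i + 2) := by push_cast; rw [add_assoc]; rfl
  rw [dL, subst_eq_self_of_degenerate t n (i + 1) x (by rwa [hprev, hnext])]

theorem stmt13_general (t : X → X → X → X) :
    ∀ (n j : ℕ) (x : Fin (n + 2) → X), j + 1 ≤ n →
      x (↑(j + 1)) = t (x ↑j) (x ↑(j + 1)) (x ↑(j + 2)) →
      dL t n (j + 1) x = dL t n j x :=
  fun n j x _ ↦ dL_succ_eq_of_degenerate t n j x

/-- If the ternary operation satisfies LN and RN and the tuple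
`(x₀,…,xₙ₊₁)` has a degenerate triple at positions `j, j+1, j+2`
(`xⱼ₊₁ = [xⱼ xⱼ₊₁ xⱼ₊₂]`), then the consecutive left face maps agree:
`d_{j+1}ⁿ'ᴸ x = d_jⁿ'ᴸ x`. -/
theorem stmt13 (t : X → X → X → X)
    (hLN : ∀ a b c d, t a b (t b c d) = t a (t a b c) (t (t a b c) c d))
    (hRN : ∀ a b c d, t (t a b c) c d = t (t a b (t b c d)) (t b c d) d) :
    ∀ (n j : ℕ) (x : Fin (n + 2) → X), j + 1 ≤ n →
      x (↑(j + 1)) = t (x ↑j) (x ↑(j + 1)) (x ↑(j + 2)) →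
      dL t n (j + 1) x = dL t n j x :=
  stmt13_general t
end
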